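/- arXiv:1607.04685 — 2 statements merged into one kernel-verified Lean document; each statement's English description precedes it below -/
import Mathlib

section
/- If x satisfies liminf_{n→∞} (1/n) Σ_{k=0}^{n-1} g(f^k(x)) > λ̄ > 0 for a bounded function g, then the set of λ̄-effective hyperbolic times Γ(x) = {n : Σ_{j=k}^{n-1} g(f^j(x)) ≥ λ̄(n−k) for all 0 ≤ k < n} is infinite and has positive lower asymptotic density. -/
/-!
With `S n = ∑_{k<n} g (f^k x) - λ̄ n`, the effective hyperbolic times are exactly the records of
`S`, the times `n` with `S j ≤ S n` for all `j < n`. The increments of `S` are at most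
`B = C + λ̄`, so the running maximum of `S` can only grow at records and by at most `B` there:
`max_{k<N} S k ≤ B · #(records below N)`. Choosing `λ̄ < c < liminf`, the average hypothesis gives
`S n ≥ (c - λ̄) n` for large `n`, hence at least `(c - λ̄) N / 2B` records below `N`.
-/

open Filter Set

def records {α : Type*} [Preorder α] (S : ℕ → α) : Set ℕ := {n | ∀ j < n, S j ≤ S n}

theorem ncard_inter_Iio_succ_of_mem {A : Set ℕ} {N : ℕ} (hN : N ∈ A) :
    (A ∩ Iio (N + 1)).ncard = (A ∩ Iio N).ncard + 1 := by
  rw [Iio_add_one_eq_Iic, ← Iio_insert, inter_insert_of_mem hN,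
    ncard_insert_of_notMem (by simp) ((finite_Iio N).inter_of_right A)]

theorem le_mul_ncard_records_inter_Iio {S : ℕ → ℝ} {B : ℝ} (hS0 : S 0 = 0) (hB : 0 ≤ B)
    (hstep : ∀ n, S (n + 1) ≤ S n + B) :
    ∀ N, ∀ k < N, S k ≤ B * (records S ∩ Iio N).ncard := by
  intro N
  induction N with
  | zero => simp
  | succ N ih =>
    have hmono : B * (records S ∩ Iio N).ncard ≤ B * (records S ∩ Iio (N + 1)).ncard := by
      have := ncard_le_ncard (inter_subset_inter_right (records S) (Iio_subset_Iio N.le_succ))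
        ((finite_Iio (N + 1)).inter_of_right _)
      gcongr
    intro k hk
    rcases Nat.lt_succ_iff_lt_or_eq.mp hk with hk | rfl
    · exact (ih k hk).trans hmono
    by_cases hrec : k ∈ records S
    · have hprev : S k ≤ B * (records S ∩ Iio k).ncard + B := by
        cases k with
        | zero => rw [hS0]; positivity
        | succ n => linarith [hstep n, ih n n.lt_add_one]
      rw [ncard_inter_Iio_succ_of_mem hrec]
      push_cast
      linarith
    · obtain ⟨j, hj, hSj⟩ : ∃ j < k, S k < S j := by simpa [records] using hrec
      linarith [ih j hj]

theorem eventually_mul_le_ncard_records_inter_Iio {S : ℕ → ℝ} {B ε : ℝ} (hS0 : S 0 = 0)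
    (hB : 0 < B) (hstep : ∀ n, S (n + 1) ≤ S n + B) (hε : 0 ≤ ε)
    (hgrowth : ∀ᶠ n in atTop, ε * n ≤ S n) :
    ∀ᶠ N in atTop, ε / (2 * B) * N ≤ (records S ∩ Iio N).ncard := by
  obtain ⟨n₀, hn₀⟩ := eventually_atTop.mp hgrowth
  filter_upwards [eventually_gt_atTop (n₀ + 1)] with N hN
  obtain ⟨m, rfl⟩ : ∃ m, N = m + 1 := ⟨N - 1, by omega⟩
  have hm : (1 : ℝ) ≤ m := by exact_mod_cast (by omega : 1 ≤ m)
  have hcount : ε * m ≤ B * (records S ∩ Iio (m + 1)).ncard :=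
    (hn₀ m (by omega)).trans (le_mul_ncard_records_inter_Iio hS0 hB.le hstep _ m m.lt_add_one)
  rw [div_mul_eq_mul_div, div_le_iff₀ (by positivity)]
  push_cast
  nlinarith

theorem infinite_of_eventually_mul_le_ncard_inter_Iio {A : Set ℕ} {δ : ℝ} (hδ : 0 < δ)
    (h : ∀ᶠ N in atTop, δ * N ≤ (A ∩ Iio N).ncard) : A.Infinite := by
  intro hA
  obtain ⟨N, hN, hlarge⟩ := (h.and (eventually_gt_atTop ⌈A.ncard / δ⌉₊)).exists
  have hle : ((A ∩ Iio N).ncard : ℝ) ≤ A.ncard := by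
    exact_mod_cast ncard_le_ncard inter_subset_left hA
  have hlt : (A.ncard : ℝ) / δ < N := (Nat.le_ceil _).trans_lt (by exact_mod_cast hlarge)
  rw [div_lt_iff₀ hδ] at hlt
  linarith

theorem liminf_ncard_inter_Iio_div_pos {A : Set ℕ} {δ : ℝ} (hδ : 0 < δ)
    (h : ∀ᶠ N in atTop, δ * N ≤ (A ∩ Iio N).ncard) :
    0 < liminf (fun N : ℕ => ((A ∩ Iio N).ncard : ℝ) / N) atTop := by
  have hcobdd : IsCoboundedUnder (· ≥ ·) atTop (fun N : ℕ => ((A ∩ Iio N).ncard : ℝ) / N) := by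
    refine isCoboundedUnder_ge_of_le atTop (x := 1) fun N => div_le_one_of_le₀ ?_ N.cast_nonneg
    exact_mod_cast (ncard_le_ncard inter_subset_right (finite_Iio N)).trans (ncard_Iio_nat N).le
  refine hδ.trans_le (le_liminf_of_le hcobdd ?_)
  filter_upwards [h, eventually_gt_atTop 0] with N hN hpos
  rwa [le_div_iff₀ (by exact_mod_cast hpos)]

theorem eventually_mul_lt_sum_range_of_lt_liminf {a : ℕ → ℝ} {m c : ℝ} (ha : ∀ k, m ≤ a k)
    (hc : c < liminf (fun n : ℕ => (n : ℝ)⁻¹ * ∑ k ∈ Finset.range n, a k) atTop) :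
    ∀ᶠ n in atTop, c * n < ∑ k ∈ Finset.range n, a k := by
  have hbdd : IsBoundedUnder (· ≥ ·) atTop
      (fun n : ℕ => (n : ℝ)⁻¹ * ∑ k ∈ Finset.range n, a k) := by
    refine isBoundedUnder_of_eventually_ge (a := m) ?_
    filter_upwards [eventually_gt_atTop 0] with n hn
    rw [le_inv_mul_iff₀ (by exact_mod_cast hn)]
    simpa using Finset.card_nsmul_le_sum (Finset.range n) a m fun k _ => ha k
  filter_upwards [eventually_lt_of_lt_liminf hc hbdd, eventually_gt_atTop 0] with n hn hpos
  rwa [lt_inv_mul_iff₀ (by exact_mod_cast hpos), mul_comm] at hn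

/-- If the Birkhoff averages of a bounded function `g` along the orbit
of `x` have liminf strictly greater than `λ̄ > 0`, then the set of `λ̄`-effective
hyperbolic times (Pliss times) is infinite and has positive lower asymptotic
density. -/
theorem effective_hyperbolic_times_infinite {X : Type*}
    (f : X → X) (g : X → ℝ) (C : ℝ) (hg : ∀ y : X, |g y| ≤ C)
    (lam : ℝ) (hlam : 0 < lam) (x : X)
    (hlim : lam <
      liminf (fun n : ℕ => (n : ℝ)⁻¹ * ∑ k ∈ Finset.range n, g (f^[k] x)) atTop)
    (Γ : Set ℕ)
    (hΓ : Γ = {n : ℕ | ∀ k : ℕ, k < n →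
      lam * ((n : ℝ) - (k : ℝ)) ≤ ∑ j ∈ Finset.Ico k n, g (f^[j] x)}) :
    Γ.Infinite ∧
      0 < liminf (fun N : ℕ => ((Γ ∩ Set.Iio N).ncard : ℝ) / N) atTop := by
  set S : ℕ → ℝ := fun n => ∑ k ∈ Finset.range n, g (f^[k] x) - lam * n with hS
  have hΓS : Γ = records S := by
    rw [hΓ]
    ext n
    refine forall₂_congr fun k hk => ?_
    rw [Finset.sum_Ico_eq_sub _ hk.le]
    constructor <;> intro h <;> linarith
  have hstep : ∀ n, S (n + 1) ≤ S n + (C + lam) := fun n => by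
    simp only [hS, Finset.sum_range_succ]
    push_cast
    linarith [le_of_abs_le (hg (f^[n] x))]
  obtain ⟨c, hlam_c, hc⟩ := exists_between hlim
  have hgrowth : ∀ᶠ n in atTop, (c - lam) * n ≤ S n := by
    filter_upwards [eventually_mul_lt_sum_range_of_lt_liminf (fun k => neg_le_of_abs_le (hg _)) hc]
      with n hn
    simp only [hS]
    linarith
  have hC : 0 ≤ C := (abs_nonneg _).trans (hg x)
  have hδ : 0 < (c - lam) / (2 * (C + lam)) := by
    have := sub_pos.2 hlam_c
    positivity
  have hdense := eventually_mul_le_ncard_records_inter_Iio (by simp [hS]) (by positivity) hstep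
    (sub_nonneg.2 hlam_c.le) hgrowth
  rw [hΓS]
  exact ⟨infinite_of_eventually_mul_le_ncard_inter_Iio hδ hdense,
    liminf_ncard_inter_Iio_div_pos hδ hdense⟩
end

section
/- (Pliss lemma) Let a_1, ..., a_N be real numbers with a_i ≤ A for all i and Σ_{i=1}^N a_i ≥ cN for some c < A. Then for any c' < c, there exist at least θN indices n (with θ = (c−c')/(A−c')) such that Σ_{i=k+1}^{n} a_i ≥ c'(n−k) for all 0 ≤ k < n. -/
/-!
Put `S n = ∑_{i ≤ n} (a i - c')`; the indices in question are exactly the `n ≥ 1` at which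
`S n` is a weak record, `S k ≤ S n` for all `k < n`. The running maximum of `S` only moves at
records, and there by at most one increment `a n - c' ≤ A - c'`. Hence
`(c - c') N ≤ S N ≤ max_{n ≤ N} S n ≤ (A - c') · #records`.
-/

open Finset

section RunningMax

variable (S : ℕ → ℝ) {D : ℝ}

lemma partialSups_add_one_le (n : ℕ) (hD : S (n + 1) - S n ≤ D) :
    partialSups S (n + 1) ≤
      partialSups S n + if ∀ k < n + 1, S k ≤ S (n + 1) then D else 0 := by
  rw [show partialSups S (n + 1) = partialSups S n ⊔ S (n + 1) from partialSups_succ S n]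
  split_ifs with hrecord
  · have hmax : partialSups S n ≤ S (n + 1) :=
      partialSups_le _ _ _ fun k hk => hrecord k (Nat.lt_succ_of_le hk)
    rw [max_eq_right hmax]
    linarith [le_partialSups S n]
  · push Not at hrecord
    obtain ⟨k, hk, hlt⟩ := hrecord
    rw [add_zero, max_eq_left]
    exact hlt.le.trans (le_partialSups_of_le S (Nat.lt_succ_iff.1 hk))

lemma partialSups_sub_le_sum_ite (N : ℕ) (hD : ∀ n < N, S (n + 1) - S n ≤ D) :
    partialSups S N - S 0 ≤ ∑ n ∈ Icc 1 N, if ∀ k < n, S k ≤ S n then D else 0 := by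
  induction N with
  | zero => simp
  | succ N ih =>
    rw [sum_Icc_succ_top (by omega)]
    linarith [ih fun n hn => hD n (hn.trans N.lt_succ_self),
      partialSups_add_one_le S N (hD N N.lt_succ_self)]

theorem sub_le_mul_card_filter_forall_lt_le (N : ℕ) (hD : ∀ n < N, S (n + 1) - S n ≤ D) :
    S N - S 0 ≤ D * #{n ∈ Icc 1 N | ∀ k < n, S k ≤ S n} :=
  calc S N - S 0 ≤ partialSups S N - S 0 := by gcongr; exact le_partialSups S N
    _ ≤ ∑ n ∈ Icc 1 N, if ∀ k < n, S k ≤ S n then D else 0 := partialSups_sub_le_sum_ite S N hD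
    _ = D * #{n ∈ Icc 1 N | ∀ k < n, S k ≤ S n} := by
      rw [← sum_filter, sum_const, nsmul_eq_mul, mul_comm]

end RunningMax

lemma sum_Ioc_sub_sub_sum_Ioc_sub (a : ℕ → ℝ) (c' : ℝ) {k n : ℕ} (hkn : k ≤ n) :
    ∑ i ∈ Ioc 0 n, (a i - c') - ∑ i ∈ Ioc 0 k, (a i - c') =
      ∑ i ∈ Icc (k + 1) n, a i - c' * ((n : ℝ) - k) := by
  rw [← sum_Ioc_consecutive _ k.zero_le hkn, add_sub_cancel_left, Icc_add_one_left_eq_Ioc,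
    sum_sub_distrib, sum_const, Nat.card_Ioc, nsmul_eq_mul, Nat.cast_sub hkn, mul_comm]

theorem pliss_lemma_general (N : ℕ) (a : ℕ → ℝ) (A c c' : ℝ)
    (hA : ∀ i ∈ Finset.Icc 1 N, a i ≤ A) (hcA : c < A) (hc' : c' < c)
    (hsum : c * (N : ℝ) ≤ ∑ i ∈ Finset.Icc 1 N, a i) :
    ((c - c') / (A - c')) * (N : ℝ) ≤
      (({n : ℕ | n ∈ Finset.Icc 1 N ∧ ∀ k : ℕ, k < n →
        c' * ((n : ℝ) - (k : ℝ)) ≤ ∑ i ∈ Finset.Icc (k + 1) n, a i}).ncard : ℝ) := by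
  set S : ℕ → ℝ := fun n => ∑ i ∈ Ioc 0 n, (a i - c')
  have hS : ∀ k n, k ≤ n → S n - S k = ∑ i ∈ Icc (k + 1) n, a i - c' * ((n : ℝ) - k) :=
    fun k n => sum_Ioc_sub_sub_sum_Ioc_sub a c'
  have hhyperbolic : {n : ℕ | n ∈ Icc 1 N ∧ ∀ k : ℕ, k < n →
      c' * ((n : ℝ) - (k : ℝ)) ≤ ∑ i ∈ Icc (k + 1) n, a i} =
      ↑{n ∈ Icc 1 N | ∀ k < n, S k ≤ S n} := by
    ext n
    simp only [coe_filter, Set.mem_ofPred_eq]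
    refine and_congr_right fun _ => forall₂_congr fun k hk => ?_
    constructor <;> intro <;> linarith [hS k n hk.le]
  have hrecords := sub_le_mul_card_filter_forall_lt_le S N (D := A - c') fun n hn => by
    have hstep := hS n (n + 1) n.le_succ
    rw [Icc_self, sum_singleton] at hstep
    push_cast at hstep
    linarith [hA (n + 1) (mem_Icc.2 ⟨by omega, by omega⟩)]
  have hgain : (c - c') * N ≤ S N - S 0 := by
    have htotal := hS 0 N N.zero_le
    rw [zero_add, Nat.cast_zero, sub_zero] at htotal
    linarith
  rw [hhyperbolic, Set.ncard_coe_finset, div_mul_eq_mul_div, div_le_iff₀ (by linarith)]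
  linarith

/-- Pliss lemma: If `a_1, …, a_N ≤ A` and `∑ a_i ≥ cN` with `c < A`,
then for any `c' < c` there are at least `θN` indices `n ∈ [1,N]`, with
`θ = (c - c')/(A - c')`, such that `∑_{i=k+1}^n a_i ≥ c'(n-k)` for all `0 ≤ k < n`. -/
theorem pliss_lemma (N : ℕ) (hN : 0 < N) (a : ℕ → ℝ) (A c c' : ℝ)
    (hA : ∀ i ∈ Finset.Icc 1 N, a i ≤ A) (hcA : c < A) (hc' : c' < c)
    (hsum : c * (N : ℝ) ≤ ∑ i ∈ Finset.Icc 1 N, a i) :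
    ((c - c') / (A - c')) * (N : ℝ) ≤
      (({n : ℕ | n ∈ Finset.Icc 1 N ∧ ∀ k : ℕ, k < n →
        c' * ((n : ℝ) - (k : ℝ)) ≤ ∑ i ∈ Finset.Icc (k + 1) n, a i}).ncard : ℝ) :=
  pliss_lemma_general N a A c c' hA hcA hc' hsum
end
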